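/- arXiv:math/0606219 — 2 statements merged into one kernel-verified Lean document; each statement's English description precedes it below -/
import Mathlib

section
/- Let X be a real random variable with Gaussian law of mean 0 and variance σ² > 0. Then X² has the Gamma distribution with shape parameter 1/2 and rate parameter 1/(2σ²). -/
/-!
A centred Gaussian density `f` is even, so the law of `X²` has density
`(f √t + f (-√t)) / (2√t) = f √t / √t` on `t > 0` (fold `ℝ` onto `(0, ∞)`, then substitute
`t = x²`). For variance `v` this is `e^{-t/(2v)} / √(2π v t)`, which is the Gamma density of shape
`1/2` and rate `1/(2v)` because `Γ(1/2) = √π`.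
-/

open MeasureTheory ProbabilityTheory Real Set

open scoped ENNReal NNReal

lemma lintegral_Iio_zero_eq_lintegral_Ioi_zero_comp_neg (φ : ℝ → ℝ≥0∞) :
    ∫⁻ x in Iio 0, φ x = ∫⁻ x in Ioi 0, φ (-x) := by
  simpa using lintegral_image_eq_lintegral_abs_deriv_mul (measurableSet_Ioi (a := 0))
    (fun x _ => (hasDerivAt_neg x).hasDerivWithinAt) neg_injective.injOn φ

lemma lintegral_eq_lintegral_Ioi_zero_add_comp_neg {φ : ℝ → ℝ≥0∞} (hφ : Measurable φ) :
    ∫⁻ x, φ x = ∫⁻ x in Ioi 0, (φ x + φ (-x)) :=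
  calc ∫⁻ x, φ x = ∫⁻ x in Iio 0 ∪ Ioi 0, φ x := by
        rw [Iio_union_Ioi, restrict_compl_singleton]
    _ = ∫⁻ x in Ioi 0, (φ x + φ (-x)) := by
        rw [lintegral_union measurableSet_Ioi
            ((Iio_disjoint_Ici le_rfl).mono_right Ioi_subset_Ici_self),
          lintegral_Iio_zero_eq_lintegral_Ioi_zero_comp_neg, lintegral_add_left hφ, add_comm]

lemma lintegral_Ioi_zero_comp_sq (g : ℝ → ℝ≥0∞) :
    ∫⁻ x in Ioi 0, ENNReal.ofReal (2 * x) * g (x ^ 2) = ∫⁻ t in Ioi 0, g t := by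
  have himage : (· ^ 2) '' Ioi (0 : ℝ) = Ioi 0 := by
    ext t
    refine ⟨?_, fun ht => ⟨√t, sqrt_pos.2 ht, sq_sqrt ht.le⟩⟩
    rintro ⟨x, hx, rfl⟩
    exact pow_pos (mem_Ioi.1 hx) 2
  have h := lintegral_image_eq_lintegral_abs_deriv_mul measurableSet_Ioi
    (fun x _ => by simpa using (hasDerivAt_pow 2 x).hasDerivWithinAt)
    ((pow_left_strictMonoOn₀ two_ne_zero).injOn.mono Ioi_subset_Ici_self) g
  rw [himage] at h
  rw [h]
  refine setLIntegral_congr_fun measurableSet_Ioi fun x (hx : 0 < x) => ?_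
  rw [abs_of_pos (by positivity)]

noncomputable def densitySq (f : ℝ → ℝ≥0∞) : ℝ → ℝ≥0∞ :=
  (Ioi 0).indicator fun t => (f √t + f (-√t)) / ENNReal.ofReal (2 * √t)

lemma measurable_densitySq {f : ℝ → ℝ≥0∞} (hf : Measurable f) : Measurable (densitySq f) :=
  Measurable.indicator (by fun_prop) measurableSet_Ioi

lemma ofReal_two_mul_mul_densitySq_sq (f : ℝ → ℝ≥0∞) {x : ℝ} (hx : 0 < x) :
    ENNReal.ofReal (2 * x) * densitySq f (x ^ 2) = f x + f (-x) := by
  rw [densitySq, indicator_of_mem (mem_Ioi.2 (by positivity)), sqrt_sq hx.le,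
    ENNReal.mul_div_cancel (by simpa using hx) ENNReal.ofReal_ne_top]

theorem map_sq_withDensity_volume {f : ℝ → ℝ≥0∞} (hf : Measurable f) :
    (volume.withDensity f).map (· ^ 2) = volume.withDensity (densitySq f) := by
  refine Measure.ext_of_lintegral _ fun g hg => ?_
  have hsq : Measurable fun x : ℝ => x ^ 2 := by fun_prop
  have hgsq : Measurable fun x : ℝ => g (x ^ 2) := hg.comp hsq
  calc ∫⁻ t, g t ∂(volume.withDensity f).map (· ^ 2)
      = ∫⁻ x, f x * g (x ^ 2) := by
        rw [lintegral_map hg hsq, lintegral_withDensity_eq_lintegral_mul _ hf hgsq]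
        rfl
    _ = ∫⁻ x in Ioi 0, (f x + f (-x)) * g (x ^ 2) := by
        rw [lintegral_eq_lintegral_Ioi_zero_add_comp_neg (φ := fun x => f x * g (x ^ 2))
          (by fun_prop)]
        simp only [neg_sq, add_mul]
    _ = ∫⁻ x in Ioi 0, ENNReal.ofReal (2 * x) * (densitySq f (x ^ 2) * g (x ^ 2)) := by
        refine setLIntegral_congr_fun measurableSet_Ioi fun x (hx : 0 < x) => ?_
        rw [← mul_assoc, ofReal_two_mul_mul_densitySq_sq f hx]
    _ = ∫⁻ t in Ioi 0, densitySq f t * g t :=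
        lintegral_Ioi_zero_comp_sq fun t => densitySq f t * g t
    _ = ∫⁻ t, densitySq f t * g t :=
        setLIntegral_eq_of_support_subset
          ((Function.support_mul_subset_left _ _).trans support_indicator_subset)
    _ = ∫⁻ t, g t ∂volume.withDensity (densitySq f) := by
        rw [lintegral_withDensity_eq_lintegral_mul _ (measurable_densitySq hf) hg]
        rfl

lemma gammaPDF_of_nonpos {a r x : ℝ} (ha : a ≠ 1) (hx : x ≤ 0) : gammaPDF a r x = 0 := by
  obtain hx | rfl := hx.lt_or_eq
  · exact gammaPDF_of_neg hx
  · rw [gammaPDF_of_nonneg le_rfl, zero_rpow (sub_ne_zero.2 ha)]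
    simp

lemma gaussianPDFReal_zero_sqrt_div_sqrt {v : ℝ≥0} (hv : v ≠ 0) {t : ℝ} (ht : 0 < t) :
    gaussianPDFReal 0 v √t / √t =
      (1 / (2 * v)) ^ (1 / 2 : ℝ) / Gamma (1 / 2) * t ^ (1 / 2 - 1 : ℝ) *
        exp (-(1 / (2 * v) * t)) := by
  have hv' : (0 : ℝ) < v := by positivity
  rw [gaussianPDFReal, Gamma_one_half_eq, ← sqrt_eq_rpow, sub_zero, sq_sqrt ht.le,
    show (1 / 2 - 1 : ℝ) = -(1 / 2) by norm_num, rpow_neg ht.le, ← sqrt_eq_rpow,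
    show 2 * π * v = 2 * v * π by ring, sqrt_mul (by positivity), one_div (2 * (v : ℝ)),
    sqrt_inv]
  field_simp

lemma densitySq_gaussianPDF_zero {v : ℝ≥0} (hv : v ≠ 0) :
    densitySq (gaussianPDF 0 v) = gammaPDF (1 / 2) (1 / (2 * v)) := by
  ext t
  rcases le_or_gt t 0 with ht | ht
  · rw [densitySq, indicator_of_notMem (notMem_Ioi.2 ht), gammaPDF_of_nonpos (by norm_num) ht]
  · have hs : 0 < √t := sqrt_pos.2 ht
    have heven : gaussianPDF 0 v (-√t) = gaussianPDF 0 v √t := by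
      simp [gaussianPDF, gaussianPDFReal]
    rw [densitySq, indicator_of_mem (mem_Ioi.2 ht), gammaPDF_of_nonneg ht.le, heven,
      ← gaussianPDFReal_zero_sqrt_div_sqrt hv ht, gaussianPDF, ← two_mul,
      ENNReal.ofReal_mul zero_le_two, ENNReal.ofReal_ofNat,
      ENNReal.mul_div_mul_left _ _ two_ne_zero ENNReal.ofNat_ne_top,
      ENNReal.ofReal_div_of_pos hs]

theorem gaussianReal_zero_map_sq {v : ℝ≥0} (hv : v ≠ 0) :
    (gaussianReal 0 v).map (· ^ 2) = gammaMeasure (1 / 2) (1 / (2 * v)) := by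
  rw [gaussianReal_of_var_ne_zero 0 hv, map_sq_withDensity_volume (measurable_gaussianPDF 0 v),
    densitySq_gaussianPDF_zero hv, gammaMeasure]

/-- If `X` is a real random variable with Gaussian law of mean `0` and variance `σ² > 0`,
then `X²` has the Gamma distribution with shape `1/2` and rate `1/(2σ²)`. -/
theorem sq_of_gaussian_is_gamma
    {Ω : Type*} [MeasurableSpace Ω] (μ : Measure Ω)
    (X : Ω → ℝ) (σ : ℝ) (hσ : 0 < σ) (hmeas : Measurable X)
    (hgauss : Measure.map X μ = gaussianReal 0 ⟨σ ^ 2, by positivity⟩) :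
    Measure.map (fun ω => X ω ^ 2) μ = gammaMeasure (1 / 2) (1 / (2 * σ ^ 2)) := by
  have hv : (⟨σ ^ 2, by positivity⟩ : ℝ≥0) ≠ 0 := fun h =>
    (pow_pos hσ 2).ne' (congrArg NNReal.toReal h)
  rw [show (fun ω => X ω ^ 2) = (· ^ 2) ∘ X from rfl, ← Measure.map_map (by fun_prop) hmeas,
    hgauss]
  exact gaussianReal_zero_map_sq hv
end

section
/- Let f : ℝ → ℝ be continuously differentiable and compactly supported, with support contained in [0, ∞). Define the Abel transform g(u) = 2 ∫_{u}^{∞} f(x) · x/√(x² − u²) dx for u > 0. Then g is differentiable on (0, ∞) and the inversion formula holds: for every x > 0, f(x) = −(1/π) ∫_{x}^{∞} g'(u)/√(u² − x²) du. -/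
/-!
Substituting `x = √(t² + u²)` turns the Abel transform into `g u = 2 ∫_{t>0} f (√(t² + u²)) dt`,
which may be differentiated under the integral sign. Substituting `u = √(s² + x²)` in the
inversion integral then turns it into twice the integral over the quadrant `s, t > 0` of the
radial function `f' (√(s² + t² + x²)) / √(s² + t² + x²)`. In polar coordinates the angle
contributes `π / 2`, and the radial integrand `r f' (√(r² + x²)) / √(r² + x²)` is the derivative
of `r ↦ f (√(r² + x²))`, so it integrates to `-f x`.
-/

open Real MeasureTheory Set Filter

theorem HasCompactSupport.comp_of_norm_le_abs {X β : Type*} [NormedAddCommGroup X]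
    [ProperSpace X] [Zero β] {h : ℝ → β} (hh : HasCompactSupport h) {φ : X → ℝ}
    (hφ : ∀ p, ‖p‖ ≤ |φ p|) :
    HasCompactSupport fun p => h (φ p) := by
  obtain ⟨R, hR⟩ := hh.isCompact.isBounded.subset_closedBall 0
  refine HasCompactSupport.intro (isCompact_closedBall 0 R) fun p hp => ?_
  refine image_eq_zero_of_notMem_tsupport fun hmem => hp ?_
  have := hR hmem
  rw [Metric.mem_closedBall, dist_zero_right, Real.norm_eq_abs] at this
  simpa using (hφ p).trans this

theorem hasDerivAt_sqrt_sq_add {a t : ℝ} (h : t ^ 2 + a ≠ 0) :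
    HasDerivAt (fun s => √(s ^ 2 + a)) (t / √(t ^ 2 + a)) t := by
  convert ((hasDerivAt_pow 2 t).add_const a).sqrt h using 1
  field_simp
  ring

theorem image_sqrt_sq_add_sq_Ioi {c : ℝ} (hc : 0 ≤ c) :
    (fun t => √(t ^ 2 + c ^ 2)) '' Ioi 0 = Ioi c := by
  ext y
  constructor
  · rintro ⟨t, ht : 0 < t, rfl⟩
    calc c = √(c ^ 2) := (sqrt_sq hc).symm
      _ < √(t ^ 2 + c ^ 2) := sqrt_lt_sqrt (sq_nonneg c) (by nlinarith)
  · intro (hy : c < y)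
    have hyc : 0 < y ^ 2 - c ^ 2 := by nlinarith
    refine ⟨√(y ^ 2 - c ^ 2), sqrt_pos.2 hyc, ?_⟩
    simp only [sq_sqrt hyc.le, sub_add_cancel, sqrt_sq (hc.trans hy.le)]

theorem integral_Ioi_eq_integral_Ioi_sqrt_sq_add_sq {E : Type*} [NormedAddCommGroup E]
    [NormedSpace ℝ E] {c : ℝ} (hc : 0 ≤ c) (F : ℝ → E) :
    ∫ x in Ioi c, F x = ∫ t in Ioi 0, (t / √(t ^ 2 + c ^ 2)) • F (√(t ^ 2 + c ^ 2)) := by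
  have hderiv : ∀ t ∈ Ioi (0 : ℝ), HasDerivWithinAt (fun s => √(s ^ 2 + c ^ 2))
      (t / √(t ^ 2 + c ^ 2)) (Ioi 0) t := fun t (ht : 0 < t) =>
    (hasDerivAt_sqrt_sq_add (by positivity)).hasDerivWithinAt
  have hinj : InjOn (fun t => √(t ^ 2 + c ^ 2)) (Ioi 0) := by
    intro a (ha : 0 < a) b (hb : 0 < b) hab
    rw [sqrt_inj (by positivity) (by positivity)] at hab
    nlinarith
  rw [← image_sqrt_sq_add_sq_Ioi hc,
    integral_image_eq_integral_abs_deriv_smul measurableSet_Ioi hderiv hinj F]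
  refine setIntegral_congr_fun measurableSet_Ioi fun t (ht : 0 < t) => ?_
  rw [abs_of_nonneg (by positivity)]

theorem integral_Ioi_mul_div_sqrt_sq_sub_sq {f : ℝ → ℝ} {u : ℝ} (hu : 0 ≤ u) :
    ∫ x in Ioi u, f x * x / √(x ^ 2 - u ^ 2) = ∫ t in Ioi 0, f (√(t ^ 2 + u ^ 2)) := by
  rw [integral_Ioi_eq_integral_Ioi_sqrt_sq_add_sq hu]
  refine setIntegral_congr_fun measurableSet_Ioi fun t (ht : 0 < t) => ?_
  have hρ : 0 < √(t ^ 2 + u ^ 2) := by positivity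
  rw [smul_eq_mul, sq_sqrt (by positivity), add_sub_cancel_right, sqrt_sq ht.le]
  field_simp

theorem hasDerivAt_integral_Ioi_comp_sqrt_sq_add_sq {f : ℝ → ℝ} (hf : ContDiff ℝ 1 f)
    (hsupp : HasCompactSupport f) (u : ℝ) :
    HasDerivAt (fun v => ∫ t in Ioi 0, f (√(t ^ 2 + v ^ 2)))
      (∫ t in Ioi 0, deriv f (√(t ^ 2 + u ^ 2)) * (u / √(t ^ 2 + u ^ 2))) u := by
  obtain ⟨M, hM⟩ := hsupp.deriv.exists_bound_of_continuous (hf.continuous_deriv le_rfl)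
  obtain ⟨R, hR⟩ := hsupp.isCompact.isBounded.subset_closedBall 0
  have hM0 : 0 ≤ M := (norm_nonneg _).trans (hM 0)
  have hbound (t v : ℝ) : ‖deriv f (√(t ^ 2 + v ^ 2)) * (v / √(t ^ 2 + v ^ 2))‖
      ≤ (Metric.closedBall 0 R).indicator (fun _ => M) t := by
    by_cases h0 : deriv f (√(t ^ 2 + v ^ 2)) = 0
    · rw [h0, zero_mul, norm_zero]
      exact indicator_nonneg (fun _ _ => hM0) t
    have hρ : √(t ^ 2 + v ^ 2) ∈ Metric.closedBall 0 R :=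
      hR (tsupport_deriv_subset (subset_tsupport _ h0))
    have ht : t ∈ Metric.closedBall 0 R := by
      rw [mem_closedBall_zero_iff, norm_eq_abs] at hρ ⊢
      exact (abs_le_sqrt (by nlinarith)).trans (le_of_abs_le hρ)
    have hquot : ‖v / √(t ^ 2 + v ^ 2)‖ ≤ 1 := by
      rw [norm_div, norm_eq_abs, norm_eq_abs, abs_of_nonneg (sqrt_nonneg _)]
      exact div_le_one_of_le₀ (abs_le_sqrt (by nlinarith)) (sqrt_nonneg _)
    rw [indicator_of_mem ht, norm_mul]
    simpa using mul_le_mul (hM _) hquot (norm_nonneg _) hM0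
  have hdiff (t : ℝ) (ht : 0 < t) (v : ℝ) : HasDerivAt (fun w => f (√(t ^ 2 + w ^ 2)))
      (deriv f (√(t ^ 2 + v ^ 2)) * (v / √(t ^ 2 + v ^ 2))) v := by
    have hsqrt : HasDerivAt (fun w => √(t ^ 2 + w ^ 2)) (v / √(t ^ 2 + v ^ 2)) v := by
      simpa only [add_comm (t ^ 2)] using
        hasDerivAt_sqrt_sq_add (a := t ^ 2) (t := v) (by positivity)
    exact (hf.differentiable one_ne_zero _).hasDerivAt.comp v hsqrt
  refine (hasDerivAt_integral_of_dominated_loc_of_deriv_le univ_mem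
    (Eventually.of_forall fun v => ?_) ?_ ?_
    (Eventually.of_forall fun t v _ => hbound t v) ?_
    ((ae_restrict_iff' measurableSet_Ioi).2
      (Eventually.of_forall fun t ht v _ => hdiff t ht v))).2
  · exact (hf.continuous.comp (by fun_prop)).aestronglyMeasurable
  · refine Integrable.integrableOn (Continuous.integrable_of_hasCompactSupport ?_ ?_)
    · exact hf.continuous.comp (by fun_prop)
    · refine hsupp.comp_of_norm_le_abs fun t => ?_
      rw [norm_eq_abs, abs_of_nonneg (sqrt_nonneg _)]
      exact abs_le_sqrt (by nlinarith)
  · exact ((measurable_deriv f).comp (by fun_prop)).mul (by fun_prop) |>.aestronglyMeasurable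
  · exact ((integrable_indicator_iff measurableSet_closedBall).2
      (integrableOn_const (measure_closedBall_lt_top).ne)).restrict

theorem hasDerivAt_integral_Ioi_mul_div_sqrt_sq_sub_sq {f : ℝ → ℝ} (hf : ContDiff ℝ 1 f)
    (hsupp : HasCompactSupport f) {u : ℝ} (hu : 0 < u) :
    HasDerivAt (fun v => ∫ x in Ioi v, f x * x / √(x ^ 2 - v ^ 2))
      (∫ t in Ioi 0, deriv f (√(t ^ 2 + u ^ 2)) * (u / √(t ^ 2 + u ^ 2))) u := by
  refine (hasDerivAt_integral_Ioi_comp_sqrt_sq_add_sq hf hsupp u).congr_of_eventuallyEq ?_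
  filter_upwards [Ioi_mem_nhds hu] with v (hv : 0 < v)
  exact integral_Ioi_mul_div_sqrt_sq_sub_sq hv.le

theorem integral_Ioi_div_sqrt_sq_sub_sq_eq_integral_Ioi_Ioi (h : ℝ → ℝ) {x : ℝ} (hx : 0 ≤ x) :
    ∫ u in Ioi x, (∫ t in Ioi 0, h (√(t ^ 2 + u ^ 2)) * (u / √(t ^ 2 + u ^ 2))) / √(u ^ 2 - x ^ 2)
      = ∫ s in Ioi 0, ∫ t in Ioi 0, h (√(s ^ 2 + t ^ 2 + x ^ 2)) / √(s ^ 2 + t ^ 2 + x ^ 2) := by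
  rw [integral_Ioi_eq_integral_Ioi_sqrt_sq_add_sq hx]
  refine setIntegral_congr_fun measurableSet_Ioi fun s (hs : 0 < s) => ?_
  set ρ := √(s ^ 2 + x ^ 2)
  have hρ : 0 < ρ := by positivity
  have hsq : ρ ^ 2 = s ^ 2 + x ^ 2 := sq_sqrt (by positivity)
  calc (s / ρ) • ((∫ t in Ioi 0, h (√(t ^ 2 + ρ ^ 2)) * (ρ / √(t ^ 2 + ρ ^ 2))) / √(ρ ^ 2 - x ^ 2))
      = ρ⁻¹ * ∫ t in Ioi 0, h (√(t ^ 2 + ρ ^ 2)) * (ρ / √(t ^ 2 + ρ ^ 2)) := by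
        rw [smul_eq_mul, hsq, add_sub_cancel_right, sqrt_sq hs.le]
        field_simp
    _ = ∫ t in Ioi 0, ρ⁻¹ * (h (√(t ^ 2 + ρ ^ 2)) * (ρ / √(t ^ 2 + ρ ^ 2))) :=
        (integral_const_mul _ _).symm
    _ = _ := by
        refine setIntegral_congr_fun measurableSet_Ioi fun t _ => ?_
        rw [hsq, show t ^ 2 + (s ^ 2 + x ^ 2) = s ^ 2 + t ^ 2 + x ^ 2 by ring]
        field_simp

theorem integral_comp_sq (G : ℝ → ℝ) : ∫ s, G (s ^ 2) = 2 * ∫ s in Ioi 0, G (s ^ 2) := by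
  rw [← integral_comp_abs (f := fun s => G (s ^ 2))]
  simp only [sq_abs]

theorem integral_Ioi_Ioi_comp_sq_add_sq {Φ : ℝ → ℝ}
    (hΦ : Integrable fun p : ℝ × ℝ => Φ (p.1 ^ 2 + p.2 ^ 2)) :
    ∫ s in Ioi 0, ∫ t in Ioi 0, Φ (s ^ 2 + t ^ 2) = π / 2 * ∫ r in Ioi 0, r * Φ (r ^ 2) := by
  have hquadrants : ∫ p : ℝ × ℝ, Φ (p.1 ^ 2 + p.2 ^ 2)
      = 4 * ∫ s in Ioi 0, ∫ t in Ioi 0, Φ (s ^ 2 + t ^ 2) := by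
    have hinner (s : ℝ) := integral_comp_sq fun q => Φ (s ^ 2 + q)
    rw [Measure.volume_eq_prod, integral_prod _ hΦ]
    simp only [hinner]
    rw [integral_comp_sq fun q => 2 * ∫ t in Ioi 0, Φ (q + t ^ 2), integral_const_mul]
    ring
  have hpolar : ∫ p : ℝ × ℝ, Φ (p.1 ^ 2 + p.2 ^ 2) = 2 * π * ∫ r in Ioi 0, r * Φ (r ^ 2) := by
    have hradial (p : ℝ × ℝ) : p.1 • Φ ((polarCoord.symm p).1 ^ 2 + (polarCoord.symm p).2 ^ 2)
        = p.1 * Φ (p.1 ^ 2) * 1 := by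
      rw [polarCoord_symm_apply, smul_eq_mul, mul_one, mul_pow, mul_pow, ← mul_add,
        cos_sq_add_sin_sq, mul_one]
    rw [← integral_comp_polarCoord_symm, polarCoord_target, Measure.volume_eq_prod]
    simp only [hradial]
    rw [setIntegral_prod_mul (fun r => r * Φ (r ^ 2)) (fun _ => (1 : ℝ)), setIntegral_const,
      volume_real_Ioo_of_le (by linarith [pi_pos])]
    simp only [smul_eq_mul]
    ring
  linarith

theorem integral_Ioi_mul_deriv_comp_sqrt_sq_add_sq {f : ℝ → ℝ} (hf : ContDiff ℝ 1 f)
    (hsupp : HasCompactSupport f) {x : ℝ} (hx : 0 < x) :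
    ∫ r in Ioi 0, r * (deriv f (√(r ^ 2 + x ^ 2)) / √(r ^ 2 + x ^ 2)) = -f x := by
  have hnorm (r : ℝ) : ‖r‖ ≤ |√(r ^ 2 + x ^ 2)| := by
    rw [norm_eq_abs, abs_of_nonneg (sqrt_nonneg _)]
    exact abs_le_sqrt (by nlinarith)
  have hderiv (r : ℝ) : HasDerivAt (fun s => f (√(s ^ 2 + x ^ 2)))
      (r * (deriv f (√(r ^ 2 + x ^ 2)) / √(r ^ 2 + x ^ 2))) r := by
    refine ((hf.differentiable one_ne_zero _).hasDerivAt.comp r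
      (hasDerivAt_sqrt_sq_add (a := x ^ 2) (t := r) (by positivity))).congr_deriv ?_
    ring
  have hint : IntegrableOn (fun r => r * (deriv f (√(r ^ 2 + x ^ 2)) / √(r ^ 2 + x ^ 2)))
      (Ioi 0) := by
    refine Integrable.integrableOn (Continuous.integrable_of_hasCompactSupport ?_ ?_)
    · have := hf.continuous_deriv le_rfl
      fun_prop (disch := (intro; positivity))
    · refine (hsupp.deriv.comp_of_norm_le_abs hnorm).mono fun r hr h0 => hr ?_
      simp [h0]
  have hlim : Tendsto (fun r => f (√(r ^ 2 + x ^ 2))) atTop (nhds 0) :=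
    (hsupp.comp_of_norm_le_abs hnorm).is_zero_at_infty.mono_left atTop_le_cocompact
  rw [integral_Ioi_of_hasDerivAt_of_tendsto
    (hf.continuous.comp (by fun_prop)).continuousWithinAt (fun r _ => hderiv r) hint hlim]
  simp [sqrt_sq hx.le]

theorem integrable_deriv_comp_sqrt_div_sqrt {f : ℝ → ℝ} (hf : ContDiff ℝ 1 f)
    (hsupp : HasCompactSupport f) {x : ℝ} (hx : x ≠ 0) :
    Integrable fun p : ℝ × ℝ =>
      deriv f (√(p.1 ^ 2 + p.2 ^ 2 + x ^ 2)) / √(p.1 ^ 2 + p.2 ^ 2 + x ^ 2) := by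
  have hnorm (p : ℝ × ℝ) : ‖p‖ ≤ |√(p.1 ^ 2 + p.2 ^ 2 + x ^ 2)| := by
    rw [abs_of_nonneg (sqrt_nonneg _), Prod.norm_def, norm_eq_abs, norm_eq_abs]
    exact max_le (abs_le_sqrt (by nlinarith)) (abs_le_sqrt (by nlinarith))
  refine Continuous.integrable_of_hasCompactSupport ?_ ?_
  · have := hf.continuous_deriv le_rfl
    fun_prop (disch := (intro; positivity))
  · refine (hsupp.deriv.comp_of_norm_le_abs hnorm).mono fun p hp h0 => hp ?_
    simp [h0]

theorem abel_inversion_general (f : ℝ → ℝ) (hf : ContDiff ℝ 1 f) (hsupp : HasCompactSupport f)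
    (g : ℝ → ℝ)
    (hg : g = fun u => 2 * ∫ x in Set.Ioi u, f x * x / sqrt (x ^ 2 - u ^ 2)) :
    (∀ u : ℝ, 0 < u → DifferentiableAt ℝ g u) ∧
    (∀ x : ℝ, 0 < x →
      f x = -(1 / π) * ∫ u in Set.Ioi x, deriv g u / sqrt (u ^ 2 - x ^ 2)) := by
  have hderiv (u : ℝ) (hu : 0 < u) : HasDerivAt g
      (2 * ∫ t in Ioi 0, deriv f (√(t ^ 2 + u ^ 2)) * (u / √(t ^ 2 + u ^ 2))) u := by
    subst hg
    exact (hasDerivAt_integral_Ioi_mul_div_sqrt_sq_sub_sq hf hsupp hu).const_mul 2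
  refine ⟨fun u hu => (hderiv u hu).differentiableAt, fun x hx => ?_⟩
  calc f x = -(1 / π) * (2 * (π / 2 *
        ∫ r in Ioi 0, r * (deriv f (√(r ^ 2 + x ^ 2)) / √(r ^ 2 + x ^ 2)))) := by
        rw [integral_Ioi_mul_deriv_comp_sqrt_sq_add_sq hf hsupp hx]
        field_simp
    _ = -(1 / π) * (2 * ∫ s in Ioi 0, ∫ t in Ioi 0,
        deriv f (√(s ^ 2 + t ^ 2 + x ^ 2)) / √(s ^ 2 + t ^ 2 + x ^ 2)) := by
        rw [integral_Ioi_Ioi_comp_sq_add_sq (Φ := fun q => deriv f (√(q + x ^ 2)) / √(q + x ^ 2))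
          (integrable_deriv_comp_sqrt_div_sqrt hf hsupp hx.ne')]
    _ = -(1 / π) * ∫ u in Ioi x, deriv g u / √(u ^ 2 - x ^ 2) := by
        rw [← integral_Ioi_div_sqrt_sq_sub_sq_eq_integral_Ioi_Ioi _ hx.le, ← integral_const_mul]
        refine congrArg _ (setIntegral_congr_fun measurableSet_Ioi fun u (hu : x < u) => ?_)
        rw [(hderiv u (hx.trans hu)).deriv, mul_div_assoc]

/-- Abel inversion formula: for a continuously differentiable, compactly supported
`f : ℝ → ℝ` with support in `[0,∞)`, the Abel transform
`g(u) = 2 ∫_{u}^{∞} f(x) x/√(x² − u²) dx` is differentiable on `(0,∞)` and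
`f(x) = −(1/π) ∫_{x}^{∞} g'(u)/√(u² − x²) du` for every `x > 0`. -/
theorem abel_inversion (f : ℝ → ℝ) (hf : ContDiff ℝ 1 f) (hsupp : HasCompactSupport f)
    (hpos : tsupport f ⊆ Set.Ici 0)
    (g : ℝ → ℝ)
    (hg : g = fun u => 2 * ∫ x in Set.Ioi u, f x * x / sqrt (x ^ 2 - u ^ 2)) :
    (∀ u : ℝ, 0 < u → DifferentiableAt ℝ g u) ∧
    (∀ x : ℝ, 0 < x →
      f x = -(1 / π) * ∫ u in Set.Ioi x, deriv g u / sqrt (u ^ 2 - x ^ 2)) :=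
  abel_inversion_general f hf hsupp g hg
end
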